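/- arXiv:1102.4123 — 4 statements merged into one kernel-verified Lean document; each statement's English description precedes it below -/
import Mathlib

section
/- For any real number a, the ratio Γ(x+a)/Γ(x) is asymptotic to x^a as x → +∞; that is, lim_{x→∞} Γ(x+a)/(Γ(x)·x^a) = 1. -/
/-!
Log-convexity of Γ between x and x + 1, combined with Γ(x + 1) = x Γ(x), gives Wendel's
inequalities (x / (x + a))^(1 - a) ≤ Γ(x + a) / (Γ(x) x^a) ≤ 1 for 0 ≤ a ≤ 1, which squeeze
the ratio to 1. The functional equation multiplies the ratio by (x + a) / x → 1 when a is
replaced by a + 1, so the limit propagates from [0, 1) to every real a.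
-/

open Filter Topology

theorem tendsto_add_div_self_atTop (a : ℝ) :
    Tendsto (fun x : ℝ => (x + a) / x) atTop (𝓝 1) := by
  have h : Tendsto (fun x : ℝ => 1 + a / x) atTop (𝓝 (1 + 0)) :=
    tendsto_const_nhds.add (tendsto_const_nhds.div_atTop tendsto_id)
  rw [add_zero] at h
  refine h.congr' ?_
  filter_upwards [eventually_gt_atTop 0] with x hx
  rw [add_div, div_self hx.ne']

namespace Real

theorem Gamma_add_le_rpow_mul_Gamma {x a : ℝ} (hx : 0 < x) (ha₀ : 0 ≤ a) (ha₁ : a ≤ 1) :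
    Gamma (x + a) ≤ x ^ a * Gamma x := by
  rcases ha₀.eq_or_lt with rfl | ha₀
  · simp
  rcases ha₁.eq_or_lt with rfl | ha₁
  · rw [Gamma_add_one hx.ne', rpow_one]
  have hΓ := Gamma_pos_of_pos hx
  have hconv := Gamma_mul_add_mul_le_rpow_Gamma_mul_rpow_Gamma hx (by linarith : 0 < x + 1)
    (sub_pos.2 ha₁) ha₀ (by ring)
  rw [Gamma_add_one hx.ne', mul_rpow hx.le hΓ.le] at hconv
  calc Gamma (x + a) = Gamma ((1 - a) * x + a * (x + 1)) := by ring_nf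
    _ ≤ Gamma x ^ (1 - a) * (x ^ a * Gamma x ^ a) := hconv
    _ = x ^ a * Gamma x := by
      rw [mul_left_comm, ← rpow_add hΓ, sub_add_cancel, rpow_one]

noncomputable def gammaRatio (a x : ℝ) : ℝ :=
  Gamma (x + a) / (Gamma x * x ^ a)

theorem gammaRatio_le_one {x a : ℝ} (hx : 0 < x) (ha₀ : 0 ≤ a) (ha₁ : a ≤ 1) :
    gammaRatio a x ≤ 1 := by
  rw [gammaRatio, div_le_one (by have := Gamma_pos_of_pos hx; positivity), mul_comm]
  exact Gamma_add_le_rpow_mul_Gamma hx ha₀ ha₁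

theorem div_add_rpow_le_gammaRatio {x a : ℝ} (hx : 0 < x) (ha₀ : 0 ≤ a) (ha₁ : a ≤ 1) :
    (x / (x + a)) ^ (1 - a) ≤ gammaRatio a x := by
  have hxa : 0 < x + a := by linarith
  have hΓ := Gamma_pos_of_pos hx
  -- The upper bound at the point x + a with shift 1 - a.
  have hupper : x * Gamma x ≤ (x + a) ^ (1 - a) * Gamma (x + a) := by
    rw [← Gamma_add_one hx.ne']
    convert Gamma_add_le_rpow_mul_Gamma hxa (sub_nonneg.2 ha₁) (by linarith) using 2
    ring
  rw [gammaRatio, div_rpow hx.le hxa.le, le_div_iff₀ (by positivity),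
    div_mul_eq_mul_div, div_le_iff₀ (by positivity)]
  calc x ^ (1 - a) * (Gamma x * x ^ a) = x * Gamma x := by
        rw [mul_left_comm, ← rpow_add hx, sub_add_cancel, rpow_one, mul_comm]
    _ ≤ (x + a) ^ (1 - a) * Gamma (x + a) := hupper
    _ = Gamma (x + a) * (x + a) ^ (1 - a) := mul_comm _ _

theorem tendsto_gammaRatio_of_mem_Icc {a : ℝ} (ha₀ : 0 ≤ a) (ha₁ : a ≤ 1) :
    Tendsto (gammaRatio a) atTop (𝓝 1) := by
  have hlower : Tendsto (fun x : ℝ => (x / (x + a)) ^ (1 - a)) atTop (𝓝 1) := by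
    have h := ((tendsto_add_div_self_atTop a).inv₀ one_ne_zero).rpow_const
      (p := 1 - a) (Or.inl (by norm_num))
    simpa using h
  refine tendsto_of_tendsto_of_tendsto_of_le_of_le' hlower tendsto_const_nhds ?_ ?_
  all_goals filter_upwards [eventually_gt_atTop 0] with x hx
  · exact div_add_rpow_le_gammaRatio hx ha₀ ha₁
  · exact gammaRatio_le_one hx ha₀ ha₁

theorem gammaRatio_add_one {x a : ℝ} (hx : 0 < x) (hxa : 0 < x + a) :
    gammaRatio (a + 1) x = gammaRatio a x * ((x + a) / x) := by
  have hΓ := Gamma_pos_of_pos hx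
  have hpow := rpow_pos_of_pos hx a
  rw [gammaRatio, gammaRatio, ← add_assoc, Gamma_add_one hxa.ne', rpow_add_one hx.ne']
  field_simp

theorem tendsto_gammaRatio_add_one_iff (a : ℝ) :
    Tendsto (gammaRatio (a + 1)) atTop (𝓝 1) ↔ Tendsto (gammaRatio a) atTop (𝓝 1) := by
  rw [← tendsto_mul_iff_of_ne_zero (f := gammaRatio a) (tendsto_add_div_self_atTop a) one_ne_zero, mul_one]
  refine tendsto_congr' ?_
  filter_upwards [eventually_gt_atTop 0, eventually_gt_atTop (-a)] with x hx hxa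
  exact gammaRatio_add_one hx (by linarith)

theorem tendsto_gammaRatio_add_int_iff (a : ℝ) (n : ℤ) :
    Tendsto (gammaRatio (a + n)) atTop (𝓝 1) ↔ Tendsto (gammaRatio a) atTop (𝓝 1) := by
  induction n using Int.induction_on with
  | zero => simp
  | succ k ih => rwa [Int.cast_add, Int.cast_one, ← add_assoc, tendsto_gammaRatio_add_one_iff]
  | pred k ih =>
    rwa [← tendsto_gammaRatio_add_one_iff, Int.cast_sub, Int.cast_one, add_assoc,
      sub_add_cancel]

theorem tendsto_gammaRatio (a : ℝ) : Tendsto (gammaRatio a) atTop (𝓝 1) := by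
  rw [← Int.fract_add_floor a, tendsto_gammaRatio_add_int_iff]
  exact tendsto_gammaRatio_of_mem_Icc (Int.fract_nonneg a) (Int.fract_lt_one a).le

end Real

theorem gamma_ratio_asymptotic (a : ℝ) :
    Filter.Tendsto (fun x : ℝ => Real.Gamma (x + a) / (Real.Gamma x * x ^ a))
      Filter.atTop (nhds 1) :=
  Real.tendsto_gammaRatio a
end

section
/- Let β > 0, and let m, k be positive integers and a_1, …, a_k real numbers. Define D = ∫_0^π cos(2mt) · |∏_{i=1}^k sin(t + a_i)|^β dt. Then |D| ≤ 6(1 + β)·(k/m)^{min(1, β)}. -/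
/-!
Shifting `t` by `π / (2m)` flips the sign of `cos (2mt)`, while `f t = |∏ᵢ sin (t + aᵢ)| ^ β` has
period `π`; hence `2D = ∫₀^π cos (2mt) (f t - f (t + π / (2m))) dt`. The product of sines is
`k`-Lipschitz and `x ↦ x ^ β` is `min 1 β`-Hölder on `[0, 1]` with constant `max 1 β`, so the
new integrand is at most `max 1 β · (πk / (2m)) ^ min 1 β`.
-/

open Real Function intervalIntegral

theorem Finset.abs_prod_sub_prod_le_sum {ι : Type*} (s : Finset ι) {x y : ι → ℝ}
    (hx : ∀ i ∈ s, |x i| ≤ 1) (hy : ∀ i ∈ s, |y i| ≤ 1) :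
    |∏ i ∈ s, x i - ∏ i ∈ s, y i| ≤ ∑ i ∈ s, |x i - y i| := by
  classical
  induction s using Finset.induction_on with
  | empty => simp
  | insert j s hj ih =>
    rw [prod_insert hj, prod_insert hj, sum_insert hj]
    have hxj := hx j (mem_insert_self j s)
    have hys : |∏ i ∈ s, y i| ≤ 1 := by
      rw [abs_prod]
      exact prod_le_one (fun _ _ ↦ abs_nonneg _) fun i hi ↦ hy i (mem_insert_of_mem hi)
    have hrest := ih (fun i hi ↦ hx i (mem_insert_of_mem hi))
      (fun i hi ↦ hy i (mem_insert_of_mem hi))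
    calc |x j * ∏ i ∈ s, x i - y j * ∏ i ∈ s, y i|
        = |x j * (∏ i ∈ s, x i - ∏ i ∈ s, y i) + (x j - y j) * ∏ i ∈ s, y i| := by
          congr 1; ring
      _ ≤ |x j| * |∏ i ∈ s, x i - ∏ i ∈ s, y i| + |x j - y j| * |∏ i ∈ s, y i| := by
        rw [← abs_mul, ← abs_mul]; exact abs_add_le _ _
      _ ≤ 1 * ∑ i ∈ s, |x i - y i| + |x j - y j| * 1 := by gcongr
      _ = |x j - y j| + ∑ i ∈ s, |x i - y i| := by ring

theorem abs_prod_sin_add_sub_prod_sin_add_le {ι : Type*} [Fintype ι] (a : ι → ℝ) (s t : ℝ) :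
    |∏ i, sin (s + a i) - ∏ i, sin (t + a i)| ≤ Fintype.card ι * |s - t| :=
  calc |∏ i, sin (s + a i) - ∏ i, sin (t + a i)|
      ≤ ∑ i, |sin (s + a i) - sin (t + a i)| :=
        Finset.abs_prod_sub_prod_le_sum _ (fun _ _ ↦ abs_sin_le_one _) fun _ _ ↦ abs_sin_le_one _
    _ ≤ ∑ _i : ι, |s - t| := Finset.sum_le_sum fun i _ ↦ by
        simpa using abs_sin_sub_sin_le (s + a i) (t + a i)
    _ = Fintype.card ι * |s - t| := by simp

theorem periodic_abs_prod_sin_add {ι : Type*} [Fintype ι] (a : ι → ℝ) :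
    Periodic (fun t ↦ |∏ i, sin (t + a i)|) π := fun t ↦ by
  simp only [add_right_comm t π, sin_add_pi, Finset.abs_prod, abs_neg]

theorem abs_prod_sin_add_le_one {ι : Type*} [Fintype ι] (a : ι → ℝ) (t : ℝ) :
    |∏ i, sin (t + a i)| ≤ 1 := by
  rw [Finset.abs_prod]
  exact Finset.prod_le_one (fun _ _ ↦ abs_nonneg _) fun _ _ ↦ abs_sin_le_one _

theorem Real.abs_rpow_sub_rpow_le_abs_sub_rpow {x y β : ℝ} (hx : 0 ≤ x) (hy : 0 ≤ y)
    (hβ₀ : 0 ≤ β) (hβ₁ : β ≤ 1) : |x ^ β - y ^ β| ≤ |x - y| ^ β := by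
  wlog hyx : y ≤ x generalizing x y
  · rw [abs_sub_comm, abs_sub_comm x]; exact this hy hx (le_of_not_ge hyx)
  have hsub : x ^ β ≤ (x - y) ^ β + y ^ β := by
    simpa using rpow_add_le_add_rpow (sub_nonneg.2 hyx) hy hβ₀ hβ₁
  rw [abs_of_nonneg (sub_nonneg.2 (rpow_le_rpow hy hyx hβ₀)), abs_of_nonneg (sub_nonneg.2 hyx)]
  linarith

theorem Real.abs_rpow_sub_rpow_le_mul_abs_sub {x y β : ℝ} (hx : x ∈ Set.Icc (0 : ℝ) 1)
    (hy : y ∈ Set.Icc (0 : ℝ) 1) (hβ : 1 ≤ β) : |x ^ β - y ^ β| ≤ β * |x - y| := by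
  have hderiv : ∀ z ∈ Set.Icc (0 : ℝ) 1,
      HasDerivWithinAt (fun z ↦ z ^ β) (β * z ^ (β - 1)) (Set.Icc 0 1) z :=
    fun z _ ↦ (hasDerivAt_rpow_const (Or.inr hβ)).hasDerivWithinAt
  have hbound : ∀ z ∈ Set.Icc (0 : ℝ) 1, ‖β * z ^ (β - 1)‖ ≤ β := fun z hz ↦ by
    rw [norm_mul, norm_of_nonneg (rpow_nonneg hz.1 _), Real.norm_of_nonneg (by linarith)]
    exact mul_le_of_le_one_right (by linarith) (rpow_le_one hz.1 hz.2 (by linarith))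
  simpa using
    Convex.norm_image_sub_le_of_norm_hasDerivWithin_le hderiv hbound (convex_Icc 0 1) hy hx

theorem Real.abs_rpow_sub_rpow_le_max_mul_abs_sub_rpow_min {x y β : ℝ}
    (hx : x ∈ Set.Icc (0 : ℝ) 1) (hy : y ∈ Set.Icc (0 : ℝ) 1) (hβ : 0 ≤ β) :
    |x ^ β - y ^ β| ≤ max 1 β * |x - y| ^ min 1 β := by
  rcases le_total β 1 with hβ₁ | hβ₁
  · rw [max_eq_left hβ₁, min_eq_right hβ₁, one_mul]
    exact abs_rpow_sub_rpow_le_abs_sub_rpow hx.1 hy.1 hβ hβ₁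
  · rw [max_eq_right hβ₁, min_eq_left hβ₁, rpow_one]
    exact abs_rpow_sub_rpow_le_mul_abs_sub hx hy hβ₁

theorem abs_rpow_abs_prod_sin_add_sub_le {ι : Type*} [Fintype ι] (a : ι → ℝ) {β : ℝ}
    (hβ : 0 ≤ β) (s t : ℝ) :
    |(|∏ i, sin (s + a i)|) ^ β - |∏ i, sin (t + a i)| ^ β|
      ≤ max 1 β * (Fintype.card ι * |s - t|) ^ min 1 β :=
  calc _ ≤ max 1 β * |(|∏ i, sin (s + a i)|) - (|∏ i, sin (t + a i)|)| ^ min 1 β :=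
        abs_rpow_sub_rpow_le_max_mul_abs_sub_rpow_min ⟨abs_nonneg _, abs_prod_sin_add_le_one a s⟩
          ⟨abs_nonneg _, abs_prod_sin_add_le_one a t⟩ hβ
    _ ≤ max 1 β * (Fintype.card ι * |s - t|) ^ min 1 β := by
        gcongr
        exact (abs_abs_sub_abs_le_abs_sub _ _).trans (abs_prod_sin_add_sub_prod_sin_add_le a s t)

theorem integral_cos_mul_eq_half_integral_sub_shift {m : ℕ} (hm : 0 < m) {f : ℝ → ℝ}
    (hf : Continuous f) (hper : Periodic f π) :
    ∫ t in (0 : ℝ)..π, cos (2 * m * t) * f t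
      = (∫ t in (0 : ℝ)..π, cos (2 * m * t) * (f t - f (t + π / (2 * m)))) / 2 := by
  have hcos : Periodic (fun t ↦ cos (2 * m * t)) π := fun t ↦ by
    simp only [show 2 * m * (t + π) = 2 * m * t + m * (2 * π) by ring, cos_add_nat_mul_two_pi]
  have hg : Periodic (fun t ↦ cos (2 * m * t) * f t) π := hcos.mul hper
  have hhalf : ∀ t, cos (2 * m * (t + π / (2 * m))) = -cos (2 * m * t) := fun t ↦ by
    rw [mul_add, mul_div_cancel₀ _ (by positivity), cos_add_pi]
  have hshift : ∫ t in (0 : ℝ)..π, cos (2 * m * t) * f (t + π / (2 * m))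
      = -∫ t in (0 : ℝ)..π, cos (2 * m * t) * f t := by
    have := integral_comp_add_right (fun t ↦ cos (2 * m * t) * f t) (π / (2 * m))
      (a := 0) (b := π)
    rw [zero_add, add_comm π, hg.intervalIntegral_add_eq _ 0, zero_add] at this
    simp only [hhalf, neg_mul, integral_neg] at this
    linarith
  simp only [mul_sub]
  rw [integral_sub ((by fun_prop : Continuous _).intervalIntegrable _ _)
    ((by fun_prop : Continuous _).intervalIntegrable _ _), hshift]
  ring

theorem abs_integral_cos_mul_le_of_abs_sub_shift_le {m : ℕ} (hm : 0 < m) {f : ℝ → ℝ}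
    (hf : Continuous f) (hper : Periodic f π) {C : ℝ}
    (hC : ∀ t, |f t - f (t + π / (2 * m))| ≤ C) :
    |∫ t in (0 : ℝ)..π, cos (2 * m * t) * f t| ≤ π / 2 * C := by
  have hbound := norm_integral_le_of_norm_le_const (a := 0) (b := π)
    (f := fun t ↦ cos (2 * m * t) * (f t - f (t + π / (2 * m)))) (C := C) fun t _ ↦ by
      rw [norm_mul]
      exact (mul_le_of_le_one_left (abs_nonneg _) (abs_cos_le_one _)).trans (hC t)
  rw [integral_cos_mul_eq_half_integral_sub_shift hm hf hper, abs_div, abs_two]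
  rw [sub_zero, abs_of_pos pi_pos, Real.norm_eq_abs] at hbound
  linarith

theorem stmt2_general (β : ℝ) (hβ : 0 < β) (m k : ℕ) (hm : 1 ≤ m)
    (a : Fin k → ℝ) :
    |∫ t in (0:ℝ)..Real.pi,
        Real.cos (2 * m * t) * |∏ i, Real.sin (t + a i)| ^ β|
      ≤ 6 * (1 + β) * ((k : ℝ) / m) ^ min 1 β := by
  have hshift : ∀ t, |(|∏ i, sin (t + a i)|) ^ β - |∏ i, sin (t + π / (2 * m) + a i)| ^ β|
      ≤ max 1 β * (π / 2) * (k / m) ^ min 1 β := fun t ↦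
    calc _ ≤ max 1 β * (k * |t - (t + π / (2 * m))|) ^ min 1 β := by
          simpa using abs_rpow_abs_prod_sin_add_sub_le a hβ.le t (t + π / (2 * m))
      _ = max 1 β * ((π / 2) ^ min 1 β * (k / m) ^ min 1 β) := by
          rw [← mul_rpow (by positivity) (by positivity), sub_add_cancel_left, abs_neg,
            abs_of_pos (by positivity)]
          ring_nf
      _ ≤ max 1 β * (π / 2) * (k / m) ^ min 1 β := by
          rw [mul_assoc]
          gcongr
          exact rpow_le_self_of_one_le (by linarith [pi_gt_three]) (min_le_left _ _)
  calc _ ≤ π / 2 * (max 1 β * (π / 2) * (k / m) ^ min 1 β) :=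
        abs_integral_cos_mul_le_of_abs_sub_shift_le hm
          ((by fun_prop : Continuous _).rpow_const fun _ ↦ Or.inr hβ.le)
          ((periodic_abs_prod_sin_add a).comp (· ^ β)) hshift
    _ = (π / 2) ^ 2 * max 1 β * (k / m) ^ min 1 β := by ring
    _ ≤ 6 * (1 + β) * (k / m) ^ min 1 β := by
        gcongr
        · nlinarith [pi_lt_four, pi_pos]
        · exact max_le (by linarith) (by linarith)

theorem stmt2 (β : ℝ) (hβ : 0 < β) (m k : ℕ) (hm : 1 ≤ m) (hk : 1 ≤ k)
    (a : Fin k → ℝ) :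
    |∫ t in (0:ℝ)..Real.pi,
        Real.cos (2 * m * t) * |∏ i, Real.sin (t + a i)| ^ β|
      ≤ 6 * (1 + β) * ((k : ℝ) / m) ^ min 1 β :=
  stmt2_general β hβ m k hm a
end

section
/- Let W_n = U_n^T U_n where U_n is an n×n Haar-distributed unitary matrix and n ≥ 2. Then E[|Tr(W_n)|²] = 2n/(n+1). -/
/-!
Since `Tr(UᵀU) = ∑ᵢⱼ Uᵢⱼ²`, the expectation `E|Tr(UᵀU)|²` is the sum of the moments
`E[U_p² conj(U_q)²]`. Multiplying a row or a column of `U` by `i` negates such a moment unless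
`p = q`, so only the fourth moments `E|U_p|⁴` survive.

To compute them along a row `r`, right-multiply by the unitary `(1 + i P)/√2`, where `P` is the
permutation matrix of the transposition `(j l)`. It replaces `x = U_rj`, `y = U_rl` by
`(x + iy)/√2` and `(y + ix)/√2`, whose product is `i(x² + y²)/2`, so invariance gives
`E|x|²|y|² = E|x² + y²|²/4`, which is `(E|x|⁴ + E|y|⁴)/4` for `j ≠ l`. Summing over `j, l`
against `(∑ⱼ |U_rj|²)² = 1` yields `∑ⱼ E|U_rj|⁴ = 2/(n+1)`.
-/

open MeasureTheory Matrix ComplexConjugate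

namespace Matrix

theorem trace_transpose_mul_self {m n R : Type*} [Fintype m] [Fintype n] [CommSemiring R]
    (A : Matrix m n R) : trace (Aᵀ * A) = ∑ i, ∑ j, A i j ^ 2 := by
  simp only [trace, diag_apply, mul_apply, transpose_apply, sq]
  exact Finset.sum_comm

variable {ι : Type*} [Fintype ι] [DecidableEq ι]

theorem isCompact_unitaryGroup {𝕜 : Type*} [RCLike 𝕜] :
    IsCompact (unitaryGroup ι 𝕜 : Set (Matrix ι ι 𝕜)) := by
  have hclosed : IsClosed {U : Matrix ι ι 𝕜 | star U * U = 1} :=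
    isClosed_eq (continuous_star.matrix_mul continuous_id) continuous_const
  rw [show (unitaryGroup ι 𝕜 : Set (Matrix ι ι 𝕜)) = {U | star U * U = 1} from
    Set.ext fun _ => mem_unitaryGroup_iff']
  refine (isCompact_univ_pi fun _ => isCompact_univ_pi fun _ =>
    isCompact_closedBall (0 : 𝕜) 1).of_isClosed_subset hclosed ?_
  intro U hU i _ j _
  simpa using entry_norm_bound_of_unitary (mem_unitaryGroup_iff'.mpr hU) i j

instance {𝕜 : Type*} [RCLike 𝕜] : CompactSpace (unitaryGroup ι 𝕜) :=
  isCompact_iff_compactSpace.mp isCompact_unitaryGroup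

theorem diagonal_mem_unitaryGroup {α : Type*} [CommRing α] [StarRing α] {d : ι → α}
    (hd : ∀ k, d k ∈ unitary α) : diagonal d ∈ unitaryGroup ι α := by
  rw [mem_unitaryGroup_iff, star_eq_conjTranspose, diagonal_conjTranspose,
    diagonal_mul_diagonal, ← diagonal_one]
  exact congrArg diagonal (funext fun k => Unitary.mul_star_self_of_mem (hd k))

theorem sum_mul_star_of_mem_unitaryGroup {α : Type*} [CommRing α] [StarRing α]
    {U : Matrix ι ι α} (hU : U ∈ unitaryGroup ι α) (i : ι) :
    ∑ j, U i j * star (U i j) = 1 := by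
  simpa [mul_apply] using congrFun (congrFun (mem_unitaryGroup_iff.mp hU) i) i

end Matrix

theorem Complex.inv_sqrt_two_mul_self : ((√2 : ℝ) : ℂ)⁻¹ * ((√2 : ℝ) : ℂ)⁻¹ = 1 / 2 := by
  rw [← mul_inv, ← ofReal_mul, Real.mul_self_sqrt zero_le_two]
  norm_num

theorem smul_one_add_I_smul_mem_unitary {A : Type*} [Ring A] [StarRing A] [Algebra ℂ A]
    [StarModule ℂ A] {B : A} (hB : IsSelfAdjoint B) (hBB : B * B = 1) :
    ((√2 : ℝ) : ℂ)⁻¹ • (1 + Complex.I • B) ∈ unitary A := by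
  have hs : ((√2 : ℝ) : ℂ)⁻¹ * ((√2 : ℝ) : ℂ)⁻¹ * 2 = 1 := by
    rw [Complex.inv_sqrt_two_mul_self]; norm_num
  have hstar : star (1 + Complex.I • B) = 1 - Complex.I • B := by
    simp [star_smul, hB.star_eq, sub_eq_add_neg]
  have h₁ : (1 - Complex.I • B) * (1 + Complex.I • B) = (2 : ℂ) • 1 := by
    simp only [sub_mul, mul_add, one_mul, mul_one, smul_mul_smul_comm, hBB, Complex.I_mul_I]
    module
  have h₂ : (1 + Complex.I • B) * (1 - Complex.I • B) = (2 : ℂ) • 1 := by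
    simp only [add_mul, mul_sub, one_mul, mul_one, smul_mul_smul_comm, hBB, Complex.I_mul_I]
    module
  rw [Unitary.mem_iff, star_smul, hstar, Complex.star_def, ← Complex.ofReal_inv,
    Complex.conj_ofReal]
  simp only [smul_mul_smul_comm, h₁, h₂, Complex.ofReal_inv, smul_smul, hs, one_smul, and_self]

namespace HaarUnitary

variable {ι : Type*} [Fintype ι] [DecidableEq ι]

noncomputable def phase (k : ι) : unitaryGroup ι ℂ :=
  ⟨diagonal (Pi.mulSingle k Complex.I), diagonal_mem_unitaryGroup fun m => by
    rcases eq_or_ne m k with rfl | h <;> simp [Unitary.mem_iff, *]⟩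

noncomputable def mixing (j l : ι) : unitaryGroup ι ℂ :=
  ⟨((√2 : ℝ) : ℂ)⁻¹ • (1 + Complex.I • (Equiv.swap j l).permMatrix ℂ),
    smul_one_add_I_smul_mem_unitary (by simp [IsSelfAdjoint, star_eq_conjTranspose])
      (by rw [← permMatrix_mul, Equiv.swap_mul_self, permMatrix_one])⟩

theorem mul_phase_apply (V : unitaryGroup ι ℂ) (k a b : ι) :
    (V * phase k).1 a b = V.1 a b * (Pi.mulSingle k Complex.I : ι → ℂ) b :=
  mul_diagonal _ _ _ _

theorem phase_mul_apply (V : unitaryGroup ι ℂ) (k a b : ι) :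
    (phase k * V).1 a b = (Pi.mulSingle k Complex.I : ι → ℂ) a * V.1 a b :=
  diagonal_mul _ _ _ _

theorem mul_mixing_apply (V : unitaryGroup ι ℂ) (j l a b : ι) :
    (V * mixing j l).1 a b
      = ((√2 : ℝ) : ℂ)⁻¹ * (V.1 a b + Complex.I * V.1 a (Equiv.swap j l b)) := by
  show (V.1 * (((√2 : ℝ) : ℂ)⁻¹ • _)) a b = _
  rw [mul_smul_comm, mul_add, mul_one, mul_smul_comm, PEquiv.mul_toMatrix_toPEquiv]
  simp

@[fun_prop]
theorem continuous_entry (a b : ι) : Continuous fun V : unitaryGroup ι ℂ => V.1 a b :=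
  continuous_subtype_val.matrix_elem a b

variable [MeasurableSpace (unitaryGroup ι ℂ)] (μ : Measure (unitaryGroup ι ℂ))

noncomputable def squareMoment (p q : ι × ι) : ℂ :=
  ∫ V, V.1 p.1 p.2 ^ 2 * conj (V.1 q.1 q.2) ^ 2 ∂μ

variable [BorelSpace (unitaryGroup ι ℂ)]

theorem integrable_of_continuous [IsFiniteMeasure μ] {f : unitaryGroup ι ℂ → ℂ}
    (hf : Continuous f) : Integrable f μ :=
  hf.integrable_of_hasCompactSupport (HasCompactSupport.of_compactSpace f)

theorem squareMoment_eq_zero [μ.IsMulLeftInvariant] [μ.IsMulRightInvariant] {p q : ι × ι}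
    (hpq : p ≠ q) : squareMoment μ p q = 0 := by
  obtain ⟨i, j⟩ := p
  obtain ⟨k, l⟩ := q
  by_cases hjl : j = l
  · have hik : k ≠ i := fun h => hpq (by rw [h, hjl])
    refine integral_eq_zero_of_mul_left_eq_neg (g := phase i) fun V => ?_
    simp [phase_mul_apply, hik, mul_pow]
  · refine integral_eq_zero_of_mul_right_eq_neg (g := phase j) fun V => ?_
    simp [mul_phase_apply, Ne.symm hjl, mul_pow]

theorem integral_mul_conj_mul_mul_conj [IsFiniteMeasure μ] [μ.IsMulRightInvariant] (i j l : ι) :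
    ∫ V, V.1 i j * conj (V.1 i j) * (V.1 i l * conj (V.1 i l)) ∂μ
      = (squareMoment μ (i, j) (i, j) + squareMoment μ (i, l) (i, l)
        + squareMoment μ (i, j) (i, l) + squareMoment μ (i, l) (i, j)) / 4 := by
  rw [← integral_mul_right_eq_self _ (mixing j l)]
  set s : ℂ := ((√2 : ℝ) : ℂ)⁻¹ with hs_def
  have hs : s * s = 1 / 2 := Complex.inv_sqrt_two_mul_self
  have hs_conj : conj s = s := by rw [hs_def, ← Complex.ofReal_inv, Complex.conj_ofReal]
  have hpt : ∀ V : unitaryGroup ι ℂ,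
      (V * mixing j l).1 i j * conj ((V * mixing j l).1 i j)
        * ((V * mixing j l).1 i l * conj ((V * mixing j l).1 i l))
      = (V.1 i j ^ 2 * conj (V.1 i j) ^ 2 + V.1 i l ^ 2 * conj (V.1 i l) ^ 2
        + V.1 i j ^ 2 * conj (V.1 i l) ^ 2 + V.1 i l ^ 2 * conj (V.1 i j) ^ 2) / 4 := by
    intro V
    simp only [mul_mixing_apply, Equiv.swap_apply_left, Equiv.swap_apply_right, ← hs_def,
      map_mul, map_add, hs_conj, Complex.conj_I]
    set x := V.1 i j
    set y := V.1 i l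
    -- `(x + iy)(y + ix) = i(x² + y²)` once `I * I = -1`, and `s⁴ = 1/4`
    linear_combination s ^ 4 * ((Complex.I * Complex.I + 1) * x * y * conj x * conj y
      + Complex.I * ((x ^ 2 + y ^ 2) * conj x * conj y - x * y * (conj x ^ 2 + conj y ^ 2))
      - (x ^ 2 + y ^ 2) * (conj x ^ 2 + conj y ^ 2)) * Complex.I_mul_I
      + (s * s + 1 / 2) * (x ^ 2 + y ^ 2) * (conj x ^ 2 + conj y ^ 2) * hs
  simp only [hpt]
  rw [integral_div, integral_add, integral_add, integral_add]
  · rfl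
  all_goals exact integrable_of_continuous μ (by fun_prop)

theorem sum_squareMoment_row [IsProbabilityMeasure μ] [μ.IsMulLeftInvariant]
    [μ.IsMulRightInvariant] (i : ι) :
    ∑ j, squareMoment μ (i, j) (i, j) = 2 / (Fintype.card ι + 1) := by
  have hrow : ∀ V : unitaryGroup ι ℂ, ∑ j, V.1 i j * conj (V.1 i j) = 1 :=
    fun V => sum_mul_star_of_mem_unitaryGroup V.2 i
  have hone : ∑ j, ∑ l, ∫ V, V.1 i j * conj (V.1 i j) * (V.1 i l * conj (V.1 i l)) ∂μ = 1 := by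
    calc _ = ∫ V, ∑ j, ∑ l, V.1 i j * conj (V.1 i j) * (V.1 i l * conj (V.1 i l)) ∂μ := by
          rw [integral_finsetSum _ fun j _ => integrable_of_continuous μ (by fun_prop)]
          exact Finset.sum_congr rfl fun j _ =>
            (integral_finsetSum _ fun l _ => integrable_of_continuous μ (by fun_prop)).symm
      _ = 1 := by simp [← Finset.sum_mul_sum, hrow]
  have hleft : ∀ j, ∑ l, squareMoment μ (i, j) (i, l) = squareMoment μ (i, j) (i, j) :=
    fun j => Finset.sum_eq_single j
      (fun l _ hl => squareMoment_eq_zero μ (by simpa using Ne.symm hl)) (by simp)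
  have hright : ∀ j, ∑ l, squareMoment μ (i, l) (i, j) = squareMoment μ (i, j) (i, j) :=
    fun j => Finset.sum_eq_single j
      (fun l _ hl => squareMoment_eq_zero μ (by simpa using hl)) (by simp)
  simp only [integral_mul_conj_mul_mul_conj, ← Finset.sum_div, Finset.sum_add_distrib, hleft,
    hright, Finset.sum_const, Finset.card_univ, nsmul_eq_mul, ← Finset.mul_sum] at hone
  rw [eq_div_iff (Nat.cast_add_one_ne_zero _)]
  linear_combination 2 * hone

theorem integral_norm_trace_transpose_mul_self_sq [IsProbabilityMeasure μ]
    [μ.IsMulLeftInvariant] [μ.IsMulRightInvariant] :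
    ∫ V, ‖(V.1ᵀ * V.1).trace‖ ^ 2 ∂μ = 2 * Fintype.card ι / (Fintype.card ι + 1) := by
  have hpt : ∀ V : unitaryGroup ι ℂ, ((‖(V.1ᵀ * V.1).trace‖ ^ 2 : ℝ) : ℂ)
      = ∑ p : ι × ι, ∑ q : ι × ι, V.1 p.1 p.2 ^ 2 * conj (V.1 q.1 q.2) ^ 2 := by
    intro V
    rw [Complex.ofReal_pow, ← Complex.mul_conj', trace_transpose_mul_self,
      ← Fintype.sum_prod_type', map_sum, Finset.sum_mul_sum]
    simp only [map_pow]
  have hdiag : ∀ p : ι × ι, ∑ q, squareMoment μ p q = squareMoment μ p p := fun p =>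
    Finset.sum_eq_single p (fun q _ hq => squareMoment_eq_zero μ (Ne.symm hq)) (by simp)
  apply Complex.ofReal_injective
  calc ((∫ V, ‖(V.1ᵀ * V.1).trace‖ ^ 2 ∂μ : ℝ) : ℂ)
      = ∫ V, ∑ p : ι × ι, ∑ q : ι × ι, V.1 p.1 p.2 ^ 2 * conj (V.1 q.1 q.2) ^ 2 ∂μ := by
        rw [← integral_complex_ofReal]
        exact integral_congr_ae (ae_of_all _ hpt)
    _ = ∑ p, ∑ q, squareMoment μ p q := by
        rw [integral_finsetSum _ fun p _ => integrable_of_continuous μ (by fun_prop)]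
        exact Finset.sum_congr rfl fun p _ =>
          integral_finsetSum _ fun q _ => integrable_of_continuous μ (by fun_prop)
    _ = ∑ i, ∑ j, squareMoment μ (i, j) (i, j) := by simp only [hdiag, Fintype.sum_prod_type]
    _ = _ := by
        simp only [sum_squareMoment_row, Finset.sum_const, Finset.card_univ, nsmul_eq_mul]
        push_cast
        ring

end HaarUnitary

open MeasureTheory in
theorem stmt13_general (n : ℕ) [MeasurableSpace (Matrix.unitaryGroup (Fin n) ℂ)]
    [BorelSpace (Matrix.unitaryGroup (Fin n) ℂ)]
    (μ : Measure (Matrix.unitaryGroup (Fin n) ℂ)) [IsProbabilityMeasure μ]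
    (hleft : ∀ U : Matrix.unitaryGroup (Fin n) ℂ, Measure.map (fun V => U * V) μ = μ)
    (hright : ∀ U : Matrix.unitaryGroup (Fin n) ℂ, Measure.map (fun V => V * U) μ = μ) :
    ∫ U : Matrix.unitaryGroup (Fin n) ℂ,
        ‖(Matrix.transpose U.1 * U.1).trace‖ ^ 2 ∂μ = 2 * n / (n + 1) := by
  have : μ.IsMulLeftInvariant := ⟨hleft⟩
  have : μ.IsMulRightInvariant := ⟨hright⟩
  simpa using HaarUnitary.integral_norm_trace_transpose_mul_self_sq μ

open MeasureTheory in
theorem stmt13 (n : ℕ) (hn : 2 ≤ n) [MeasurableSpace (Matrix.unitaryGroup (Fin n) ℂ)]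
    [BorelSpace (Matrix.unitaryGroup (Fin n) ℂ)]
    (μ : Measure (Matrix.unitaryGroup (Fin n) ℂ)) [IsProbabilityMeasure μ]
    (hleft : ∀ U : Matrix.unitaryGroup (Fin n) ℂ, Measure.map (fun V => U * V) μ = μ)
    (hright : ∀ U : Matrix.unitaryGroup (Fin n) ℂ, Measure.map (fun V => V * U) μ = μ) :
    ∫ U : Matrix.unitaryGroup (Fin n) ℂ,
        ‖(Matrix.transpose U.1 * U.1).trace‖ ^ 2 ∂μ = 2 * n / (n + 1) :=
  stmt13_general n μ hleft hright
end

section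
/- Let α > 0 be real, K ≥ 1 an integer, and n ≥ K an integer. For every partition λ of K with length ℓ(λ) ≤ n, define N_λ^α(n) = ∏_{(i,j)∈λ} (n + (j−1)α − (i−1)) / (n + jα − i), the product over cells (i,j) of the Young diagram of λ. Then A ≤ N_λ^α(n) ≤ B, where A = (1 − |α−1|/(n−K+α))^K if α ≥ 1 and A = 1 if α < 1, and B = (1 + |α−1|/(n−K+α))^K if α < 1 and B = 1 if α ≥ 1. -/
/-!
Writing `D = n + jα - i` for the denominator of the factor of the cell `(i, j)`, the factor is
`1 - (α - 1) / D`. Since the cell lies in one of the first `ℓ(λ) ≤ K` rows, `D ≥ n - K + α > 0`,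
so every factor lies between `1` and `1 - (α - 1) / (n - K + α)`; there are `K` factors.
-/

open Finset

namespace Finset

variable {ι R : Type*} [CommMonoidWithZero R] [Preorder R] [ZeroLEOneClass R] [PosMulMono R]
  {s : Finset ι} {a b : R}

theorem pow_card_le_prod_of_le {f : ι → R} (ha : 0 ≤ a) (h : ∀ i ∈ s, a ≤ f i) :
    a ^ #s ≤ ∏ i ∈ s, f i := by
  simpa only [prod_const] using prod_le_prod (fun _ _ => ha) h

theorem prod_le_pow_card_of_le {f : ι → R} (h0 : ∀ i ∈ s, 0 ≤ f i) (h : ∀ i ∈ s, f i ≤ b) :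
    ∏ i ∈ s, f i ≤ b ^ #s := by
  simpa only [prod_const] using prod_le_prod h0 h

theorem pow_le_prod_prod_le_pow {κ : ι → Type*} {t : ∀ i, Finset (κ i)} {f : ∀ i, κ i → R}
    (ha : 0 ≤ a) (h : ∀ i ∈ s, ∀ j ∈ t i, f i j ∈ Set.Icc a b) :
    a ^ ∑ i ∈ s, #(t i) ≤ ∏ i ∈ s, ∏ j ∈ t i, f i j ∧
      ∏ i ∈ s, ∏ j ∈ t i, f i j ≤ b ^ ∑ i ∈ s, #(t i) := by
  have hσ : ∀ x ∈ s.sigma t, f x.1 x.2 ∈ Set.Icc a b := fun x hx =>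
    h x.1 (mem_sigma.1 hx).1 x.2 (mem_sigma.1 hx).2
  rw [← card_sigma, ← prod_sigma s t fun x => f x.1 x.2]
  exact ⟨pow_card_le_prod_of_le ha fun x hx => (hσ x hx).1,
    prod_le_pow_card_of_le (fun x hx => ha.trans (hσ x hx).1) fun x hx => (hσ x hx).2⟩

end Finset

theorem one_sub_div_mem_Icc_of_le {𝕜 : Type*} [Field 𝕜] [LinearOrder 𝕜] [IsStrictOrderedRing 𝕜]
    {c P D : 𝕜} (hP : 0 < P) (hPD : P ≤ D) :
    1 - c / D ∈ Set.Icc (min 1 (1 - c / P)) (max 1 (1 - c / P)) := by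
  rcases le_total 0 c with hc | hc
  · have hcD : c / D ≤ c / P := div_le_div_of_nonneg_left hc hP hPD
    have hD : 0 ≤ c / D := div_nonneg hc (hP.le.trans hPD)
    exact ⟨min_le_of_right_le (by linarith), le_max_of_le_left (by linarith)⟩
  · have hcD : -c / D ≤ -c / P := div_le_div_of_nonneg_left (neg_nonneg.2 hc) hP hPD
    have hD : 0 ≤ -c / D := div_nonneg (neg_nonneg.2 hc) (hP.le.trans hPD)
    simp only [neg_div] at hcD hD
    exact ⟨min_le_of_left_le (by linarith), le_max_of_le_right (by linarith)⟩

theorem sub_add_le_cell_denom {α : ℝ} (hα : 0 ≤ α) (n : ℝ) {i K : ℕ} (hi : i < K) (j : ℕ) :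
    n - K + α ≤ n + (j + 1) * α - (i + 1) := by
  have hiK : (i : ℝ) + 1 ≤ K := by exact_mod_cast hi
  nlinarith [mul_nonneg (Nat.cast_nonneg j : (0 : ℝ) ≤ j) hα]

theorem cell_factor_eq (α n i j : ℝ) (hD : n + (j + 1) * α - (i + 1) ≠ 0) :
    (n + j * α - i) / (n + (j + 1) * α - (i + 1)) = 1 - (α - 1) / (n + (j + 1) * α - (i + 1)) := by
  rw [one_sub_div hD]
  ring_nf

theorem stmt14_general (α : ℝ) (hα : 0 < α) (K n L : ℕ) (hKn : K ≤ n)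
    (lam : Fin L → ℕ) (hpos : ∀ i, 0 < lam i)
    (hsum : ∑ i, lam i = K) :
    (if 1 ≤ α then (1 - |α - 1| / ((n : ℝ) - K + α)) ^ K else 1)
        ≤ (∏ i : Fin L, ∏ j ∈ Finset.range (lam i),
            ((n : ℝ) + j * α - i) / ((n : ℝ) + (j + 1) * α - (i + 1)))
      ∧ (∏ i : Fin L, ∏ j ∈ Finset.range (lam i),
            ((n : ℝ) + j * α - i) / ((n : ℝ) + (j + 1) * α - (i + 1)))
        ≤ (if α < 1 then (1 + |α - 1| / ((n : ℝ) - K + α)) ^ K else 1) := by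
  have hKn' : (K : ℝ) ≤ n := by exact_mod_cast hKn
  have hP : (0 : ℝ) < n - K + α := by linarith
  have hLK : L ≤ K := by simpa [hsum] using card_nsmul_le_sum univ lam 1 fun i _ => hpos i
  have hcell : ∀ i ∈ (univ : Finset (Fin L)), ∀ j ∈ range (lam i),
      ((n : ℝ) + j * α - i) / ((n : ℝ) + (j + 1) * α - (i + 1)) ∈
        Set.Icc (min 1 (1 - (α - 1) / (n - K + α))) (max 1 (1 - (α - 1) / (n - K + α))) := by
    intro i _ j _
    have hD := sub_add_le_cell_denom hα.le n (i.2.trans_le hLK) j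
    rw [cell_factor_eq _ _ _ _ (hP.trans_le hD).ne']
    exact one_sub_div_mem_Icc_of_le hP hD
  have hmin : 0 ≤ min 1 (1 - (α - 1) / (n - K + α)) := by
    refine le_min zero_le_one (sub_nonneg.2 ((div_le_one hP).2 ?_))
    linarith
  obtain ⟨hlow, hupp⟩ := pow_le_prod_prod_le_pow hmin hcell
  simp only [card_range, hsum] at hlow hupp
  refine ⟨le_trans ?_ hlow, hupp.trans ?_⟩
  · split_ifs with h
    · rw [abs_of_nonneg (sub_nonneg.2 h), min_eq_right (sub_le_self _ (by positivity))]
    · rw [min_eq_left ((le_sub_self_iff 1).2 (div_nonpos_of_nonpos_of_nonneg (by linarith) hP.le)),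
        one_pow]
  · split_ifs with h
    · rw [abs_of_neg (sub_neg.2 h), neg_div, ← sub_eq_add_neg,
        max_eq_right ((le_sub_self_iff 1).2 (div_nonpos_of_nonpos_of_nonneg (by linarith) hP.le))]
    · rw [max_eq_left (sub_le_self _ (div_nonneg (by linarith) hP.le)), one_pow]

theorem stmt14 (α : ℝ) (hα : 0 < α) (K n L : ℕ) (hK : 1 ≤ K) (hKn : K ≤ n)
    (lam : Fin L → ℕ) (hpos : ∀ i, 0 < lam i) (hanti : Antitone lam)
    (hsum : ∑ i, lam i = K) (hlen : L ≤ n) :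
    (if 1 ≤ α then (1 - |α - 1| / ((n : ℝ) - K + α)) ^ K else 1)
        ≤ (∏ i : Fin L, ∏ j ∈ Finset.range (lam i),
            ((n : ℝ) + j * α - i) / ((n : ℝ) + (j + 1) * α - (i + 1)))
      ∧ (∏ i : Fin L, ∏ j ∈ Finset.range (lam i),
            ((n : ℝ) + j * α - i) / ((n : ℝ) + (j + 1) * α - (i + 1)))
        ≤ (if α < 1 then (1 + |α - 1| / ((n : ℝ) - K + α)) ^ K else 1) :=
  stmt14_general α hα K n L hKn lam hpos hsum
end
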